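/- Let l be a natural number and let z ∈ ℂ with Im z ≠ 0. Then Σ_{k=0}^{l} (l−k+1)·(k+1)·z^{−(l−k+2)}·z̄^{−(k+2)} = 2·(u − ū)/(|z|⁴·(z−z̄)³), where u = (z̄²/z^{l})·(z + (l+1)·(z−z̄)/2) and ū denotes its complex conjugate; equivalently the left-hand side equals (4/(|z|⁴(z−z̄)³))·Im(u)·i. -/

import Mathlib

/-!
Multiplying by `(z z̄)^(l+2)` turns the sum into `∑_{i+j=l} (i+1)(j+1) zⁱ z̄ʲ`, the coefficient of
`tˡ` in `(1 - z t)⁻² (1 - z̄ t)⁻²`. Times `(z - z̄)³` it has a closed form, proved by induction on `l`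
through the recursion `S_{l+1} = z̄ S_l + A_{l+1}` with `A_l = ∑_{i+j=l} (i+1) zⁱ z̄ʲ`, whose product
with `(z - z̄)²` is closed in the same way. As `|z|⁴ = (z z̄)²`, the right-hand side is exactly that
closed form divided by `(z z̄)^(l+2) (z - z̄)³`, and `u - ū = 2 i Im u` gives the second form.
-/

open Complex ComplexConjugate Finset

section CommRing

variable {R : Type*} [CommRing R]

theorem sum_antidiagonal_succ_mul_pow_mul_pow_mul_sub_sq (z w : R) (n : ℕ) :
    (∑ p ∈ antidiagonal n, ((p.1 : R) + 1) * z ^ p.1 * w ^ p.2) * (z - w) ^ 2 =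
      (n + 1) * z ^ (n + 2) - (n + 2) * z ^ (n + 1) * w + w ^ (n + 2) := by
  induction n with
  | zero => simp only [HasAntidiagonal.antidiagonal_zero, sum_singleton]; push_cast; ring
  | succ n ih =>
    rw [Nat.sum_antidiagonal_succ']
    simp only [pow_succ w, ← mul_assoc, ← sum_mul]
    push_cast
    linear_combination w * ih

theorem sum_antidiagonal_succ_mul_succ_mul_pow_mul_pow_mul_sub_cube (z w : R) (n : ℕ) :
    (∑ p ∈ antidiagonal n, ((p.1 : R) + 1) * (p.2 + 1) * z ^ p.1 * w ^ p.2) * (z - w) ^ 3 =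
      w ^ (n + 2) * (2 * z + (n + 1) * (z - w)) - z ^ (n + 2) * (2 * w + (n + 1) * (w - z)) := by
  induction n with
  | zero => simp only [HasAntidiagonal.antidiagonal_zero, sum_singleton]; push_cast; ring
  | succ n ih =>
    have hA := sum_antidiagonal_succ_mul_pow_mul_pow_mul_sub_sq z w n
    rw [Nat.sum_antidiagonal_succ']
    have hterm : ∀ p ∈ antidiagonal n,
        ((p.1 : R) + 1) * (((p.2 + 1 : ℕ) : R) + 1) * z ^ p.1 * w ^ (p.2 + 1) =
          w * (((p.1 : R) + 1) * (p.2 + 1) * z ^ p.1 * w ^ p.2)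
            + w * (((p.1 : R) + 1) * z ^ p.1 * w ^ p.2) := by
      intro p _; push_cast; ring
    rw [sum_congr rfl hterm, sum_add_distrib, ← mul_sum, ← mul_sum]
    push_cast
    linear_combination w * ih + w * (z - w) * hA

end CommRing

theorem sum_range_mul_zpow_mul_zpow_eq_sum_antidiagonal_div {K : Type*} [Field K] {z w : K}
    (hz : z ≠ 0) (hw : w ≠ 0) (l : ℕ) :
    ∑ k ∈ range (l + 1), ((l - k + 1 : ℕ) : K) * ((k : K) + 1)
        * z ^ (-((l : ℤ) - (k : ℤ) + 2)) * w ^ (-((k : ℤ) + 2)) =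
      (∑ p ∈ antidiagonal l, ((p.1 : K) + 1) * (p.2 + 1) * z ^ p.1 * w ^ p.2) / (z * w) ^ (l + 2) := by
  rw [Nat.sum_antidiagonal_eq_sum_range_succ
    (fun i j => ((i : K) + 1) * (j + 1) * z ^ i * w ^ j), sum_div]
  refine sum_congr rfl fun k hk => ?_
  have hkl : k ≤ l := Nat.lt_succ_iff.mp (mem_range.mp hk)
  have hz' : -((l : ℤ) - k + 2) = k - (l + 2 : ℕ) := by push_cast; ring
  have hw' : -((k : ℤ) + 2) = (l - k : ℕ) - (l + 2 : ℕ) := by push_cast [Nat.cast_sub hkl]; ring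
  rw [hz', hw', zpow_sub₀ hz, zpow_sub₀ hw]
  simp only [zpow_natCast]
  push_cast [Nat.cast_sub hkl]
  field_simp
  ring

theorem weighted_sum_z_conj (l : ℕ) (z : ℂ) (hz : z.im ≠ 0) :
    (∑ k ∈ Finset.range (l + 1), ((l - k + 1 : ℕ) : ℂ) * ((k : ℂ) + 1)
        * z ^ (-((l : ℤ) - (k : ℤ) + 2)) * (starRingEnd ℂ z) ^ (-((k : ℤ) + 2)) =
      2 * ((starRingEnd ℂ z) ^ 2 / z ^ l * (z + ((l : ℂ) + 1) * (z - starRingEnd ℂ z) / 2)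
          - starRingEnd ℂ ((starRingEnd ℂ z) ^ 2 / z ^ l
              * (z + ((l : ℂ) + 1) * (z - starRingEnd ℂ z) / 2)))
        / (((‖z‖ : ℂ)) ^ 4 * (z - starRingEnd ℂ z) ^ 3))
    ∧
    (∑ k ∈ Finset.range (l + 1), ((l - k + 1 : ℕ) : ℂ) * ((k : ℂ) + 1)
        * z ^ (-((l : ℤ) - (k : ℤ) + 2)) * (starRingEnd ℂ z) ^ (-((k : ℤ) + 2)) =
      4 / (((‖z‖ : ℂ)) ^ 4 * (z - starRingEnd ℂ z) ^ 3)
        * (((starRingEnd ℂ z) ^ 2 / z ^ l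
            * (z + ((l : ℂ) + 1) * (z - starRingEnd ℂ z) / 2)).im : ℂ) * Complex.I) := by
  have hz0 : z ≠ 0 := fun h => hz (by simp [h])
  have hw0 : conj z ≠ 0 := (map_ne_zero _).mpr hz0
  have hzw : z - conj z ≠ 0 := by simpa [sub_conj, Complex.ext_iff] using hz
  have hnorm : (‖z‖ : ℂ) ^ 4 = (z * conj z) ^ 2 := by
    rw [mul_conj']; ring
  set u := conj z ^ 2 / z ^ l * (z + ((l : ℂ) + 1) * (z - conj z) / 2) with hu
  refine (fun hfirst => ⟨hfirst, ?_⟩) ?_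
  · have hcube := sum_antidiagonal_succ_mul_succ_mul_pow_mul_pow_mul_sub_cube z (conj z) l
    simp only [sum_range_mul_zpow_mul_zpow_eq_sum_antidiagonal_div hz0 hw0, hnorm, hu, map_mul,
      map_div₀, map_pow, map_add, map_sub, conj_conj, map_one, map_natCast, map_ofNat]
    field_simp
    linear_combination (z * conj z) ^ (l + 2) * hcube
  · rw [hfirst, sub_conj u]
    push_cast
    ring
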